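/- Let b, k be natural numbers with 1 < k ≤ b and 2k ≠ b, and let s ∈ ℂ with s ≠ 0. For f = x²·y^b + x + s·x·y^k ∈ ℂ[x,y] (the family of the paper's Example 8.8), the total Milnor number of f equals 2k, i.e. dim_ℂ ℂ[x,y]/(2x·y^b + 1 + s·y^k, b·x²·y^{b−1} + k·s·x·y^{k−1}) = 2k. -/

import Mathlib

/-!
Write `u = (2k - b)s·y^k - b` and `v = s·y^k + 1`, so that `∂ₓf = 2xy^b + v` and
`-bx·∂ₓf + 2y·∂_yf = x·u`. Since `u(0) = -b ≠ 0`, `u` is coprime to `2y^b`, and a Bézout relation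
`a·u - c·2y^b = 1` shows `x ≡ c·v` modulo the Jacobian ideal `J`; also
`u·v = u·∂ₓf - 2y^b·(x·u) ∈ J`. Conversely `x ↦ c·v, y ↦ y` kills both partials modulo `u·v`:
for `∂_yf = x·r` because there `2y·r = u·(b·a·v + 1)` and `u` is coprime to `2y`. Hence
`ℂ[x,y]/J ≅ ℂ[y]/(u·v)`, of dimension `deg (u·v) = 2k`.
-/

open MvPolynomial

noncomputable section

/-- The polynomial f = x²·y^b + x + s·x·y^k of Example 8.8
    (variables: X 0 = x, X 1 = y). -/
def f₈₈ (b k : ℕ) (s : ℂ) : MvPolynomial (Fin 2) ℂ :=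
  X 0 ^ 2 * X 1 ^ b + X 0 + C s * (X 0 * X 1 ^ k)

open scoped Polynomial

section GraphQuotient

variable {R : Type*} [CommRing R] (p q : R[X])

def evalOnGraph : MvPolynomial (Fin 2) R →ₐ[R] AdjoinRoot p :=
  aeval ![AdjoinRoot.mk p q, AdjoinRoot.root p]

@[simp]
lemma evalOnGraph_X_zero : evalOnGraph p q (X 0) = AdjoinRoot.mk p q := by
  simp [evalOnGraph]

@[simp]
lemma evalOnGraph_X_one : evalOnGraph p q (X 1) = AdjoinRoot.root p := by
  simp [evalOnGraph]

lemma evalOnGraph_aeval_X_one (r : R[X]) :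
    evalOnGraph p q (Polynomial.aeval (X 1) r) = AdjoinRoot.mk p r := by
  rw [← Polynomial.aeval_algHom_apply, evalOnGraph_X_one, AdjoinRoot.aeval_eq]

variable {p q}

def quotientEquivAdjoinRoot (J : Ideal (MvPolynomial (Fin 2) R))
    (hq : X 0 - Polynomial.aeval (X 1) q ∈ J) (hp : Polynomial.aeval (X 1) p ∈ J)
    (hJ : ∀ g ∈ J, evalOnGraph p q g = 0) :
    (MvPolynomial (Fin 2) R ⧸ J) ≃ₐ[R] AdjoinRoot p :=
  AlgEquiv.ofAlgHom (Ideal.Quotient.liftₐ J (evalOnGraph p q) hJ)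
    (AdjoinRoot.liftAlgHom p (Algebra.ofId R _) (Ideal.Quotient.mkₐ R J (X 1)) <| by
      rw [Algebra.toRingHom_ofId, ← Polynomial.aeval_def, Polynomial.aeval_algHom_apply,
        Ideal.Quotient.mkₐ_eq_mk]
      exact Ideal.Quotient.eq_zero_iff_mem.2 hp)
    (AdjoinRoot.algHom_ext <| by
      rw [AlgHom.comp_apply, AdjoinRoot.liftAlgHom_root, AlgHom.id_apply,
        ← evalOnGraph_X_one p q]
      exact AlgHom.congr_fun (Ideal.Quotient.liftₐ_comp J _ hJ) (X 1))
    (Ideal.Quotient.algHom_ext R <| by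
      rw [AlgHom.comp_assoc, Ideal.Quotient.liftₐ_comp]
      refine MvPolynomial.algHom_ext <| Fin.forall_fin_two.2 ⟨?_, ?_⟩
      · rw [AlgHom.comp_apply, evalOnGraph_X_zero, AdjoinRoot.liftAlgHom_mk,
          Algebra.toRingHom_ofId, ← Polynomial.aeval_def, Polynomial.aeval_algHom_apply,
          AlgHom.comp_apply, AlgHom.id_apply, Ideal.Quotient.mkₐ_eq_mk, Ideal.Quotient.eq,
          ← neg_sub]
        exact J.neg_mem hq
      · rw [AlgHom.comp_apply, evalOnGraph_X_one, AdjoinRoot.liftAlgHom_root]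
        rfl)

end GraphQuotient

theorem finrank_quotient_eq_natDegree {K : Type*} [Field K] {p q : K[X]} (hp0 : p ≠ 0)
    (J : Ideal (MvPolynomial (Fin 2) K)) (hq : X 0 - Polynomial.aeval (X 1) q ∈ J)
    (hp : Polynomial.aeval (X 1) p ∈ J) (hJ : ∀ g ∈ J, evalOnGraph p q g = 0) :
    Module.finrank K (MvPolynomial (Fin 2) K ⧸ J) = p.natDegree :=
  (quotientEquivAdjoinRoot J hq hp hJ).toLinearEquiv.finrank_eq.trans
    (AdjoinRoot.powerBasis hp0).finrank

abbrev jacobianIdeal {R : Type*} [CommRing R] (f : MvPolynomial (Fin 2) R) :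
    Ideal (MvPolynomial (Fin 2) R) :=
  Ideal.span {pderiv 0 f, pderiv 1 f}

lemma pderiv_zero_mem_jacobianIdeal {R : Type*} [CommRing R] (f : MvPolynomial (Fin 2) R) :
    pderiv 0 f ∈ jacobianIdeal f :=
  Ideal.subset_span (by simp)

namespace Example88

section OneVariable

variable {K : Type*} [Field K] {b k : ℕ} (s : K)

def u (b k : ℕ) (s : K) : K[X] :=
  Polynomial.C ((2 * k - b : K) * s) * Polynomial.X ^ k - Polynomial.C (b : K)

def v (k : ℕ) (s : K) : K[X] := Polynomial.C s * Polynomial.X ^ k + 1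

lemma isCoprime_u_X [CharZero K] (hb : b ≠ 0) (hk : k ≠ 0) :
    IsCoprime (u b k s) Polynomial.X := by
  refine (Polynomial.prime_X.coprime_iff_not_dvd.2 ?_).symm
  simp [Polynomial.X_dvd_iff, u, hk.symm, hb]

lemma isCoprime_u_two_mul_X_pow [CharZero K] (hb : b ≠ 0) (hk : k ≠ 0) (n : ℕ) :
    IsCoprime (u b k s) (2 * Polynomial.X ^ n) := by
  have h2 : IsUnit (2 : K[X]) := by
    rw [← map_ofNat Polynomial.C 2]
    exact Polynomial.isUnit_C.2 two_ne_zero.isUnit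
  exact (isCoprime_mul_unit_left_right h2 _ _).2 (isCoprime_u_X s hb hk).pow_right

lemma exists_bezout [CharZero K] (hb : b ≠ 0) (hk : k ≠ 0) :
    ∃ a c : K[X], a * u b k s - c * (2 * Polynomial.X ^ b) = 1 := by
  obtain ⟨a, c, h⟩ := isCoprime_u_two_mul_X_pow s hb hk b
  exact ⟨a, -c, by rw [← h]; ring⟩

variable {s} {a c : K[X]}

lemma u_mul_v_dvd_pderiv_zero_graph (hac : a * u b k s - c * (2 * Polynomial.X ^ b) = 1) :
    u b k s * v k s ∣ 2 * (c * v k s) * Polynomial.X ^ b + v k s :=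
  ⟨a, by linear_combination (-v k s) * hac⟩

lemma u_mul_v_dvd_pderiv_one_graph [CharZero K] (hb : b ≠ 0) (hk : k ≠ 0)
    (hac : a * u b k s - c * (2 * Polynomial.X ^ b) = 1) :
    u b k s * v k s ∣ Polynomial.C (b : K) * (c * v k s) ^ 2 * Polynomial.X ^ (b - 1)
      + Polynomial.C (k * s) * (c * v k s) * Polynomial.X ^ (k - 1) := by
  have hu : u b k s =
      (2 * (k : K[X]) - (b : K[X])) * Polynomial.C s * Polynomial.X ^ k - (b : K[X]) := by
    simp only [u, map_mul, map_sub, map_natCast, map_ofNat]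
  have hv : v k s = Polynomial.C s * Polynomial.X ^ k + 1 := rfl
  have hXb := mul_pow_sub_one hb (Polynomial.X : K[X])
  have hXk := mul_pow_sub_one hk (Polynomial.X : K[X])
  have h2Xr : u b k s ∣ 2 * Polynomial.X ^ 1 * ((b : K[X]) * (c * v k s) * Polynomial.X ^ (b - 1)
      + (k : K[X]) * Polynomial.C s * Polynomial.X ^ (k - 1)) :=
    ⟨(b : K[X]) * a * v k s + 1, by
      linear_combination 2 * (b : K[X]) * c * v k s * hXb + 2 * (k : K[X]) * Polynomial.C s * hXk
        - (b : K[X]) * v k s * hac - hu - (b : K[X]) * hv⟩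
  obtain ⟨e, he⟩ := (isCoprime_u_two_mul_X_pow s hb hk 1).dvd_of_dvd_mul_left h2Xr
  exact ⟨c * e, by simp only [map_mul, map_natCast]; linear_combination (c * v k s) * he⟩

lemma natDegree_u [CharZero K] (h2k : 2 * k ≠ b) (hs : s ≠ 0) : (u b k s).natDegree = k := by
  have : (2 * k - b : K) ≠ 0 := by
    rw [sub_ne_zero]; exact_mod_cast h2k
  rw [u, Polynomial.natDegree_sub_C, Polynomial.natDegree_C_mul_X_pow _ _ (mul_ne_zero this hs)]

lemma natDegree_v (hs : s ≠ 0) : (v k s).natDegree = k := by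
  rw [v, ← Polynomial.C_1, Polynomial.natDegree_add_C, Polynomial.natDegree_C_mul_X_pow _ _ hs]

lemma natDegree_u_mul_v [CharZero K] (hk : k ≠ 0) (h2k : 2 * k ≠ b) (hs : s ≠ 0) :
    (u b k s * v k s).natDegree = 2 * k := by
  have hu0 : u b k s ≠ 0 := Polynomial.ne_zero_of_natDegree_gt (n := 0) (by
    rw [natDegree_u h2k hs]; omega)
  have hv0 : v k s ≠ 0 := Polynomial.ne_zero_of_natDegree_gt (n := 0) (by
    rw [natDegree_v hs]; omega)
  rw [Polynomial.natDegree_mul hu0 hv0, natDegree_u h2k hs, natDegree_v hs, two_mul]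

end OneVariable

section Jacobian

variable {b k : ℕ} {s : ℂ}

lemma pderiv_zero_f₈₈ :
    pderiv 0 (f₈₈ b k s) = 2 * X 0 * X 1 ^ b + Polynomial.aeval (X 1) (v k s) := by
  simp [f₈₈, v, pderiv_X, MvPolynomial.algebraMap_eq]
  ring

lemma pderiv_one_f₈₈ : pderiv 1 (f₈₈ b k s) =
    C (b : ℂ) * X 0 ^ 2 * X 1 ^ (b - 1) + C (k * s) * X 0 * X 1 ^ (k - 1) := by
  simp [f₈₈, pderiv_X]
  ring

lemma X_zero_mul_aeval_u_mem_jacobianIdeal (hb : b ≠ 0) (hk : k ≠ 0) :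
    X 0 * Polynomial.aeval (X 1) (u b k s) ∈ jacobianIdeal (f₈₈ b k s) := by
  refine Ideal.mem_span_pair.2 ⟨-(C (b : ℂ) * X 0), 2 * X 1, ?_⟩
  have hXb := mul_pow_sub_one hb (X 1 : MvPolynomial (Fin 2) ℂ)
  have hXk := mul_pow_sub_one hk (X 1 : MvPolynomial (Fin 2) ℂ)
  simp only [pderiv_zero_f₈₈, pderiv_one_f₈₈, u, v, map_sub, map_add, map_mul, map_pow, map_one,
    Polynomial.aeval_X, Polynomial.aeval_C, MvPolynomial.algebraMap_eq, map_natCast, map_ofNat]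
  linear_combination (2 * (b : MvPolynomial (Fin 2) ℂ) * X 0 ^ 2) * hXb
    + (2 * (k : MvPolynomial (Fin 2) ℂ) * C s * X 0) * hXk

lemma aeval_u_mul_v_mem_jacobianIdeal (hb : b ≠ 0) (hk : k ≠ 0) :
    Polynomial.aeval (X 1) (u b k s * v k s) ∈ jacobianIdeal (f₈₈ b k s) := by
  have h := (jacobianIdeal (f₈₈ b k s)).sub_mem
    (Ideal.mul_mem_left _ (Polynomial.aeval (X 1) (u b k s)) (pderiv_zero_mem_jacobianIdeal _))
    (Ideal.mul_mem_left _ (2 * X 1 ^ b) (X_zero_mul_aeval_u_mem_jacobianIdeal hb hk))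
  rw [pderiv_zero_f₈₈] at h
  convert h using 1
  rw [map_mul]
  ring

variable {a c : ℂ[X]}

lemma X_zero_sub_aeval_mem_jacobianIdeal (hb : b ≠ 0) (hk : k ≠ 0)
    (hac : a * u b k s - c * (2 * Polynomial.X ^ b) = 1) :
    X 0 - Polynomial.aeval (X 1) (c * v k s) ∈ jacobianIdeal (f₈₈ b k s) := by
  have hac' := congrArg (Polynomial.aeval (X 1 : MvPolynomial (Fin 2) ℂ)) hac
  simp only [map_sub, map_mul, map_pow, map_one, map_ofNat, Polynomial.aeval_X] at hac'
  have h := (jacobianIdeal (f₈₈ b k s)).sub_mem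
    (Ideal.mul_mem_left _ (Polynomial.aeval (X 1) a) (X_zero_mul_aeval_u_mem_jacobianIdeal hb hk))
    (Ideal.mul_mem_left _ (Polynomial.aeval (X 1) c) (pderiv_zero_mem_jacobianIdeal _))
  rw [pderiv_zero_f₈₈] at h
  convert h using 1
  rw [map_mul]
  linear_combination (-X 0) * hac'

lemma evalOnGraph_eq_zero_of_mem_jacobianIdeal (hb : b ≠ 0) (hk : k ≠ 0)
    (hac : a * u b k s - c * (2 * Polynomial.X ^ b) = 1) :
    ∀ g ∈ jacobianIdeal (f₈₈ b k s), evalOnGraph (u b k s * v k s) (c * v k s) g = 0 := by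
  intro g hg
  refine RingHom.mem_ker.1 (Ideal.span_le.2 ?_ hg)
  rintro _ (rfl | rfl) <;> rw [SetLike.mem_coe, RingHom.mem_ker]
  · rw [pderiv_zero_f₈₈, ← AdjoinRoot.mk_eq_zero.2 (u_mul_v_dvd_pderiv_zero_graph hac)]
    simp [evalOnGraph_aeval_X_one, map_ofNat]
  · rw [pderiv_one_f₈₈, ← AdjoinRoot.mk_eq_zero.2 (u_mul_v_dvd_pderiv_one_graph hb hk hac)]
    simp

end Jacobian

end Example88

/-- for natural numbers 1 < k ≤ b with 2k ≠ b and s ≠ 0, the total Milnor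
    number of f = x²y^b + x + sxy^k equals 2k, i.e.
    dim_ℂ ℂ[x,y]/(∂f/∂x, ∂f/∂y) = 2k. -/
theorem total_milnor_number_example88 (b k : ℕ) (hk : 1 < k) (hkb : k ≤ b)
    (h2k : 2 * k ≠ b) (s : ℂ) (hs : s ≠ 0) :
    Module.finrank ℂ
      (MvPolynomial (Fin 2) ℂ ⧸
        Ideal.span {pderiv 0 (f₈₈ b k s), pderiv 1 (f₈₈ b k s)}) = 2 * k := by
  have hk0 : k ≠ 0 := by omega
  have hb0 : b ≠ 0 := by omega
  obtain ⟨a, c, hac⟩ := Example88.exists_bezout s hb0 hk0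
  have hdeg := Example88.natDegree_u_mul_v hk0 h2k hs
  rw [finrank_quotient_eq_natDegree (Polynomial.ne_zero_of_natDegree_gt (n := 0) (by omega)) _
    (Example88.X_zero_sub_aeval_mem_jacobianIdeal hb0 hk0 hac)
    (Example88.aeval_u_mul_v_mem_jacobianIdeal hb0 hk0)
    (Example88.evalOnGraph_eq_zero_of_mem_jacobianIdeal hb0 hk0 hac), hdeg]
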